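/- arXiv:math/0408212 — 2 statements merged into one kernel-verified Lean document; each statement's English description precedes it below -/
import Mathlib

section
/- Let x be a nonzero element of L with v(x) < 0 and v(x) < M_v. Then for every n >= 1 one has phi^n(x) != 0 and v(phi^n(x)) = q^(r*n) * v(x); consequently the sequence min(0, v(phi^n(x)))/q^(r*n) converges to v(x) as n -> infinity. (Lemma 2.3 of the paper: under this hypothesis the local height of x equals -v(x) up to the normalization factor.) -/
open Filter Topology Finset

universe u

section Drinfeld

variable {L : Type u} [Field L] {k : Type*} [Field k]

/-- The integer value of the valuation `v` at `y` (junk value `0` at `y = 0`). -/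
noncomputable def vz (v : L → WithTop ℤ) (y : L) : ℤ := WithTop.untopD 0 (v y)

/-- `v : L → ℤ ∪ {∞}` is a normalized discrete valuation: `v 0 = ∞`, `v` is finite and
surjective onto `ℤ` on nonzero elements, `v (x * y) = v x + v y` and
`v (x + y) ≥ min (v x) (v y)`. -/
structure IsDVal (v : L → WithTop ℤ) : Prop where
  map_zero : v 0 = ⊤
  ne_top : ∀ x : L, x ≠ 0 → v x ≠ ⊤
  map_mul : ∀ x y : L, v (x * y) = v x + v y
  add_min : ∀ x y : L, min (v x) (v y) ≤ v (x + y)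
  surj : ∀ n : ℤ, ∃ x : L, v x = (n : WithTop ℤ)

/-- `res : L → k` restricted to the valuation ring of `v` is the quotient map onto the
residue field `k` of `v`. -/
structure IsResidue (v : L → WithTop ℤ) (res : L → k) : Prop where
  map_one : res 1 = 1
  map_add : ∀ x y : L, 0 ≤ v x → 0 ≤ v y → res (x + y) = res x + res y
  map_mul : ∀ x y : L, 0 ≤ v x → 0 ≤ v y → res (x * y) = res x * res y
  eq_zero_iff : ∀ x : L, 0 ≤ v x → (res x = 0 ↔ 0 < v x)
  surj : ∀ c : k, ∃ x : L, 0 ≤ v x ∧ res x = c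

/-- The angular component of `y` at `v`, with respect to the uniformizer `π` and the
residue map `res`: the residue of `y * π ^ (-v y)`. -/
noncomputable def ac (v : L → WithTop ℤ) (π : L) (res : L → k) (y : L) : k :=
  res (y * π ^ (-(vz v y)))

/-- The `F_q`-linear map `φ(x) = ∑_{i=r₀}^{r} a i * x^(q^i)`. -/
noncomputable def phiMap (q r₀ r : ℕ) (a : ℕ → L) (x : L) : L :=
  ∑ i ∈ Finset.Icc r₀ r, a i * x ^ q ^ i

/-- The set `P_v ⊆ ℚ` of possible exceptional valuations:
`(v(a i) - v(a j))/(q^j - q^i)` for `r₀ ≤ i < j ≤ r` with `a i ≠ 0 ≠ a j`, together with `0`. -/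
def Pset (q : ℕ) (v : L → WithTop ℤ) (r₀ r : ℕ) (a : ℕ → L) : Set ℚ :=
  {0} ∪ {α : ℚ | ∃ i j : ℕ, r₀ ≤ i ∧ i < j ∧ j ≤ r ∧ a i ≠ 0 ∧ a j ≠ 0 ∧
      α = ((vz v (a i) : ℚ) - (vz v (a j) : ℚ)) / ((q : ℚ) ^ j - (q : ℚ) ^ i)}

/-- The set `J(α)` of indices where `v(a i) + q^i * α` attains its minimum. -/
def Jset (q : ℕ) (v : L → WithTop ℤ) (r₀ r : ℕ) (a : ℕ → L) (α : ℚ) : Set ℕ :=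
  {i : ℕ | r₀ ≤ i ∧ i ≤ r ∧ a i ≠ 0 ∧
    ∀ j : ℕ, r₀ ≤ j → j ≤ r → a j ≠ 0 →
      (vz v (a i) : ℚ) + (q : ℚ) ^ i * α ≤ (vz v (a j) : ℚ) + (q : ℚ) ^ j * α}

open scoped Classical in
/-- The set `R_v(α) ⊆ k_v`: `1` together with the nonzero roots of
`∑_{i ∈ J(α)} ac(a i) * X^(q^i)`. -/
noncomputable def Rset (q : ℕ) (v : L → WithTop ℤ) (π : L) (res : L → k)
    (r₀ r : ℕ) (a : ℕ → L) (α : ℚ) : Set k :=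
  {1} ∪ {γ : k | γ ≠ 0 ∧
    ∑ i ∈ Finset.Icc r₀ r,
      (if i ∈ Jset q v r₀ r a α then ac v π res (a i) * γ ^ q ^ i else 0) = 0}

/-- The exceptional condition `Exc(y)`: `v y ∈ P_v` and `ac y ∈ R_v(v y)`. -/
def Exc (q : ℕ) (v : L → WithTop ℤ) (π : L) (res : L → k)
    (r₀ r : ℕ) (a : ℕ → L) (y : L) : Prop :=
  ((vz v y : ℚ) ∈ Pset q v r₀ r a) ∧ ac v π res y ∈ Rset q v π res r₀ r a ((vz v y : ℚ))

/-- The sequence `min(0, v(φⁿ x)) / q^(r n)` whose limit is minus the local height of `x`. -/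
noncomputable def locSeq (q r : ℕ) (v : L → WithTop ℤ) (φ : L → L) (x : L) (n : ℕ) : ℝ :=
  ((min 0 (vz v (φ^[n] x)) : ℤ) : ℝ) / (q : ℝ) ^ (r * n)


end Drinfeld

/-!
Write `v x = m < 0`. The leading term `x ^ q ^ r` of `φ x` has valuation `q ^ r * m`, while the
hypothesis `v x < M_v` says exactly that every other term `a i * x ^ q ^ i` has strictly larger
valuation `v (a i) + q ^ i * m`; so `v (φ x) = q ^ r * m`. Since `m < 0`, the new valuation
`q ^ r * m ≤ m` satisfies the same hypothesis, and induction gives `v (φⁿ x) = q ^ (r n) * m`.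
The sequence `min (0, v (φⁿ x)) / q ^ (r n)` is then constantly `m`.
-/

lemma vz_of_eq_coe {L : Type*} {v : L → WithTop ℤ} {y : L} {m : ℤ} (hy : v y = m) :
    vz v y = m := by
  rw [vz, hy, WithTop.untopD_coe]

namespace IsDVal

variable {L : Type*} [Field L] {v : L → WithTop ℤ}

lemma exists_eq_coe (hv : IsDVal v) {y : L} (hy : y ≠ 0) : ∃ m : ℤ, v y = m :=
  WithTop.ne_top_iff_exists.mp (hv.ne_top y hy) |>.imp fun _ h => h.symm

lemma ne_zero_of_eq_coe (hv : IsDVal v) {y : L} {m : ℤ} (hy : v y = m) : y ≠ 0 := by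
  rintro rfl
  rw [hv.map_zero] at hy
  exact WithTop.top_ne_coe hy

lemma map_one (hv : IsDVal v) : v 1 = 0 := by
  obtain ⟨m, hm⟩ := hv.exists_eq_coe one_ne_zero
  have h := hv.map_mul 1 1
  rw [one_mul, hm, ← WithTop.coe_add, WithTop.coe_inj] at h
  rw [hm, show m = 0 by omega]
  rfl

lemma map_neg_one (hv : IsDVal v) : v (-1) = 0 := by
  obtain ⟨m, hm⟩ := hv.exists_eq_coe (neg_ne_zero.mpr one_ne_zero)
  have h := hv.map_mul (-1) (-1)
  rw [neg_mul_neg, one_mul, hv.map_one, hm, ← WithTop.coe_add] at h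
  rw [hm, show m = 0 by have := WithTop.coe_injective h; omega]
  rfl

lemma map_neg (hv : IsDVal v) (y : L) : v (-y) = v y := by
  rw [← neg_one_mul, hv.map_mul, hv.map_neg_one, zero_add]

lemma map_pow (hv : IsDVal v) (y : L) (n : ℕ) : v (y ^ n) = n • v y := by
  induction n with
  | zero => rw [pow_zero, hv.map_one, zero_smul]
  | succ n ih => rw [pow_succ, hv.map_mul, ih, succ_nsmul]

lemma map_add_eq_left (hv : IsDVal v) {y z : L} (h : v y < v z) : v (y + z) = v y := by
  refine le_antisymm ?_ (min_eq_left h.le ▸ hv.add_min y z)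
  by_contra! hlt
  have hy : min (v (y + z)) (v z) ≤ v y := by
    simpa [hv.map_neg] using hv.add_min (y + z) (-z)
  exact (min_le_iff.mp hy).elim hlt.not_ge h.not_ge

lemma lt_map_sum (hv : IsDVal v) {ι : Type*} {s : Finset ι} {f : ι → L} {c : WithTop ℤ}
    (hc : c < ⊤) (h : ∀ i ∈ s, c < v (f i)) : c < v (∑ i ∈ s, f i) := by
  induction s using Finset.cons_induction with
  | empty => rwa [Finset.sum_empty, hv.map_zero]
  | cons j s hj ih =>
    rw [Finset.sum_cons]
    refine (lt_min (h j (mem_cons_self j s)) (ih fun i hi => h i (mem_cons_of_mem hi))).trans_le ?_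
    exact hv.add_min _ _

end IsDVal

section Iterate

variable {L : Type*} [Field L] {v : L → WithTop ℤ} {q r₀ r : ℕ} {a : ℕ → L}

/-- For `v y = m`, this says `v (a i * y ^ q ^ i) > v (y ^ q ^ r)` for every lower term of `φ y`. -/
def LeadingTermDominates (v : L → WithTop ℤ) (q r₀ r : ℕ) (a : ℕ → L) (m : ℤ) : Prop :=
  ∀ i ∈ Icc r₀ (r - 1), a i ≠ 0 → ((q : ℤ) ^ r - (q : ℤ) ^ i) * m < vz v (a i)

lemma leadingTermDominates_of_lt_div (hq : 2 ≤ q) (hr : 1 ≤ r) {m : ℤ}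
    (h : ∀ i ∈ Icc r₀ (r - 1), a i ≠ 0 →
      (m : ℚ) < (vz v (a i) : ℚ) / ((q : ℚ) ^ r - (q : ℚ) ^ i)) :
    LeadingTermDominates v q r₀ r a m := by
  intro i hi hai
  have hgap : (0 : ℚ) < (q : ℚ) ^ r - (q : ℚ) ^ i := by
    have : (q : ℚ) ^ i < (q : ℚ) ^ r :=
      pow_lt_pow_right₀ (by exact_mod_cast hq) (by simp only [mem_Icc] at hi; omega)
    linarith
  have := (lt_div_iff₀ hgap).mp (h i hi hai)
  exact_mod_cast (by linarith : ((q : ℚ) ^ r - (q : ℚ) ^ i) * m < vz v (a i))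

lemma val_phiMap (hv : IsDVal v) (hr : 1 ≤ r) (hr₀r : r₀ ≤ r) (har : a r = 1) {y : L} {m : ℤ}
    (hy : v y = m) (hdom : LeadingTermDominates v q r₀ r a m) :
    v (phiMap q r₀ r a y) = ((q : ℤ) ^ r * m : ℤ) := by
  have hIcc : Icc r₀ r = insert r (Icc r₀ (r - 1)) := by
    ext i
    simp only [mem_Icc, mem_insert]
    omega
  have hr_notMem : r ∉ Icc r₀ (r - 1) := by simp only [mem_Icc]; omega
  have hlead : v (y ^ q ^ r) = ((q : ℤ) ^ r * m : ℤ) := by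
    rw [hv.map_pow, hy, ← WithTop.coe_nsmul, nsmul_eq_mul]
    push_cast
    rfl
  have htail : v (y ^ q ^ r) < v (∑ i ∈ Icc r₀ (r - 1), a i * y ^ q ^ i) := by
    rw [hlead]
    refine hv.lt_map_sum (WithTop.coe_lt_top _) fun i hi => ?_
    by_cases hai : a i = 0
    · rw [hai, zero_mul, hv.map_zero]
      exact WithTop.coe_lt_top _
    obtain ⟨b, hb⟩ := hv.exists_eq_coe hai
    have := hdom i hi hai
    rw [vz_of_eq_coe hb] at this
    rw [hv.map_mul, hb, hv.map_pow, hy, ← WithTop.coe_nsmul, ← WithTop.coe_add, WithTop.coe_lt_coe,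
      nsmul_eq_mul]
    push_cast
    linarith
  rw [phiMap, hIcc, sum_insert hr_notMem, har, one_mul, hv.map_add_eq_left htail, hlead]

lemma LeadingTermDominates.pow_mul (hq : 1 ≤ q) {m : ℤ} (hm : m ≤ 0)
    (hdom : LeadingTermDominates v q r₀ r a m) (k : ℕ) :
    LeadingTermDominates v q r₀ r a ((q : ℤ) ^ k * m) := by
  intro i hi hai
  have hqi : (q : ℤ) ^ i ≤ (q : ℤ) ^ r :=
    pow_le_pow_right₀ (by exact_mod_cast hq) (by simp only [mem_Icc] at hi; omega)
  have hqk : (1 : ℤ) ≤ (q : ℤ) ^ k := one_le_pow₀ (by exact_mod_cast hq)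
  calc ((q : ℤ) ^ r - (q : ℤ) ^ i) * ((q : ℤ) ^ k * m)
      ≤ ((q : ℤ) ^ r - (q : ℤ) ^ i) * m :=
        mul_le_mul_of_nonneg_left (by nlinarith) (by linarith)
    _ < vz v (a i) := hdom i hi hai

lemma val_iterate_phiMap (hv : IsDVal v) (hq : 1 ≤ q) (hr : 1 ≤ r) (hr₀r : r₀ ≤ r)
    (har : a r = 1) {x : L} {m : ℤ} (hx : v x = m) (hm : m ≤ 0)
    (hdom : LeadingTermDominates v q r₀ r a m) (n : ℕ) :
    v ((phiMap q r₀ r a)^[n] x) = ((q : ℤ) ^ (r * n) * m : ℤ) := by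
  induction n with
  | zero => simpa using hx
  | succ n ih =>
    rw [Function.iterate_succ_apply', val_phiMap hv hr hr₀r har ih (hdom.pow_mul hq hm _)]
    ring_nf

end Iterate

lemma locSeq_eq_of_vz_iterate {L : Type*} {v : L → WithTop ℤ} {φ : L → L} {q r : ℕ} (hq : q ≠ 0)
    {x : L} {m : ℤ} (hm : m ≤ 0) (h : ∀ n, vz v (φ^[n] x) = (q : ℤ) ^ (r * n) * m) (n : ℕ) :
    locSeq q r v φ x n = m := by
  have hneg : (q : ℤ) ^ (r * n) * m ≤ 0 := mul_nonpos_of_nonneg_of_nonpos (by positivity) hm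
  rw [locSeq, h, min_eq_right hneg]
  push_cast
  field_simp

section Drinfeld

variable {L : Type u} [Field L]

theorem statement1_general
    (p q : ℕ) (hp : p.Prime) (hq : ∃ s : ℕ, 0 < s ∧ q = p ^ s)
    (v : L → WithTop ℤ) (hv : IsDVal v)
    (r₀ r : ℕ) (hr1 : 1 ≤ r) (hr₀r : r₀ ≤ r)
    (a : ℕ → L) (har : a r = 1)
    (x : L) (hx : x ≠ 0) (hneg : v x < 0)
    (hM : ∀ i ∈ Finset.Icc r₀ (r - 1), a i ≠ 0 →
      (vz v x : ℚ) < (vz v (a i) : ℚ) / ((q : ℚ) ^ r - (q : ℚ) ^ i)) :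
    (∀ n : ℕ, 1 ≤ n → (phiMap q r₀ r a)^[n] x ≠ 0 ∧
      v ((phiMap q r₀ r a)^[n] x) = (((q : ℤ) ^ (r * n) * vz v x : ℤ) : WithTop ℤ)) ∧
    Filter.Tendsto (locSeq q r v (phiMap q r₀ r a) x) Filter.atTop (nhds (vz v x : ℝ)) := by
  have hq2 : 2 ≤ q := by
    obtain ⟨s, hs, rfl⟩ := hq
    exact hp.two_le.trans (Nat.le_self_pow hs.ne' p)
  obtain ⟨m, hm⟩ := hv.exists_eq_coe hx
  have hmx : vz v x = m := vz_of_eq_coe hm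
  have hm0 : m ≤ 0 := by
    rw [hm] at hneg
    exact_mod_cast hneg.le
  rw [hmx] at hM ⊢
  have hval := val_iterate_phiMap hv (by omega) hr1 hr₀r har hm hm0
    (leadingTermDominates_of_lt_div hq2 hr1 hM)
  refine ⟨fun n _ => ⟨hv.ne_zero_of_eq_coe (hval n), hval n⟩, ?_⟩
  have hloc := locSeq_eq_of_vz_iterate (by omega) hm0 (fun n => vz_of_eq_coe (hval n))
  exact tendsto_const_nhds.congr fun n => (hloc n).symm

/-- Lemma 2.3: if `v(x) < 0` and `v(x) < M_v`, then `v(φⁿ(x)) = q^(rn) v(x)` for all `n ≥ 1`,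
and `min(0, v(φⁿ(x)))/q^(rn)` converges to `v(x)`. -/
theorem statement1
    (p q : ℕ) (hp : p.Prime) (hq : ∃ s : ℕ, 0 < s ∧ q = p ^ s)
    [CharP L p] (F : Subfield L) (hF : Nat.card F = q)
    (v : L → WithTop ℤ) (hv : IsDVal v)
    (r₀ r : ℕ) (hr1 : 1 ≤ r) (hr₀r : r₀ ≤ r)
    (a : ℕ → L) (har₀ : a r₀ ≠ 0) (har : a r = 1)
    (x : L) (hx : x ≠ 0) (hneg : v x < 0)
    (hM : ∀ i ∈ Finset.Icc r₀ (r - 1), a i ≠ 0 →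
      (vz v x : ℚ) < (vz v (a i) : ℚ) / ((q : ℚ) ^ r - (q : ℚ) ^ i)) :
    (∀ n : ℕ, 1 ≤ n → (phiMap q r₀ r a)^[n] x ≠ 0 ∧
      v ((phiMap q r₀ r a)^[n] x) = (((q : ℤ) ^ (r * n) * vz v x : ℤ) : WithTop ℤ)) ∧
    Filter.Tendsto (locSeq q r v (phiMap q r₀ r a) x) Filter.atTop (nhds (vz v x : ℝ)) :=
  statement1_general p q hp hq v hv r₀ r hr1 hr₀r a har x hx hneg hM

end Drinfeld
end

section
/- Assume v lies in S. Let x be a nonzero element of L with v(x) <= 0 such that Exc(x) fails, and suppose it is not the case that q = 2, r = 1 and v(x) = 0. Then v(phi(x)) < M_v. (Lemma 2.5 of the paper.) -/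
/-!
Let `m` be the minimum over the nonzero coefficients of `v(a i) + q^i v(x)`. After scaling by
`π^(-m)` every term of `φ(x)` is integral, and the residue of the scaled sum is
`∑_{i ∈ J(v x)} ac(a i) ac(x)^(q^i)`. If `v x ∉ P_v` the minimum is attained only once, and if
`ac x ∉ R_v(v x)` this polynomial does not vanish at `ac x`; either way nothing cancels, so
`v(φ x) = m`. Some `a j` has negative valuation and `v x ≤ 0`, so `m ≤ v(a j) < 0` and
`m ≤ v(a i)` for all `i`. Finally `q^r - q^i ≥ 2` unless `q = 2, r = 1, i = 0`, and in that case
`v x < 0` gives `m < v(a 0)`; either way `m < v(a i) / (q^r - q^i)`.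
-/

open Filter Topology Finset

universe u

section Drinfeld

variable {L : Type u} [Field L] {k : Type*} [Field k]

variable {v : L → WithTop ℤ} {res : L → k} {π : L}

namespace IsDVal

theorem coe_vz (hv : IsDVal v) {y : L} (hy : y ≠ 0) : v y = vz v y := by
  obtain ⟨n, hn⟩ := WithTop.ne_top_iff_exists.mp (hv.ne_top y hy)
  simp [vz, ← hn]

theorem ne_zero_of_ne_top (hv : IsDVal v) {y : L} (h : v y ≠ ⊤) : y ≠ 0 := by
  rintro rfl
  exact h hv.map_zero

theorem vz_mul (hv : IsDVal v) {y z : L} (hy : y ≠ 0) (hz : z ≠ 0) :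
    vz v (y * z) = vz v y + vz v z := by
  have h := hv.map_mul y z
  rw [hv.coe_vz hy, hv.coe_vz hz, hv.coe_vz (mul_ne_zero hy hz)] at h
  exact_mod_cast h

theorem vz_one (hv : IsDVal v) : vz v (1 : L) = 0 := by
  have h := hv.vz_mul (one_ne_zero' L) (one_ne_zero' L)
  rw [mul_one] at h
  omega

theorem vz_pow (hv : IsDVal v) {y : L} (hy : y ≠ 0) (n : ℕ) :
    vz v (y ^ n) = n * vz v y := by
  induction n with
  | zero => simp [hv.vz_one]
  | succ n ih => rw [pow_succ, hv.vz_mul (pow_ne_zero n hy) hy, ih]; push_cast; ring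

theorem vz_inv (hv : IsDVal v) {y : L} (hy : y ≠ 0) : vz v y⁻¹ = -vz v y := by
  have h := hv.vz_mul hy (inv_ne_zero hy)
  rw [mul_inv_cancel₀ hy, hv.vz_one] at h
  omega

theorem vz_zpow (hv : IsDVal v) {y : L} (hy : y ≠ 0) (n : ℤ) :
    vz v (y ^ n) = n * vz v y := by
  obtain ⟨n, rfl | rfl⟩ := n.eq_nat_or_neg
  · rw [zpow_natCast, hv.vz_pow hy]
  · rw [zpow_neg, zpow_natCast, hv.vz_inv (pow_ne_zero n hy), hv.vz_pow hy]; ring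

theorem uniformizer_ne_zero (hv : IsDVal v) (hπ : v π = 1) : π ≠ 0 :=
  hv.ne_zero_of_ne_top (by simp [hπ])

theorem vz_mul_zpow_neg (hv : IsDVal v) (hπ : v π = 1) {y : L} (hy : y ≠ 0) (m : ℤ) :
    vz v (y * π ^ (-m)) = vz v y - m := by
  have hπ0 := hv.uniformizer_ne_zero hπ
  rw [hv.vz_mul hy (zpow_ne_zero _ hπ0), hv.vz_zpow hπ0, show vz v π = 1 by simp [vz, hπ]]
  ring

theorem sum_nonneg (hv : IsDVal v) {ι : Type*} (s : Finset ι) (f : ι → L)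
    (h : ∀ i ∈ s, 0 ≤ v (f i)) : 0 ≤ v (∑ i ∈ s, f i) := by
  classical
  induction s using Finset.induction_on with
  | empty => simp [hv.map_zero]
  | insert j s hj ih =>
    rw [Finset.sum_insert hj]
    exact (le_min (h j (mem_insert_self j s))
      (ih fun i hi => h i (mem_insert_of_mem hi))).trans (hv.add_min _ _)

end IsDVal

namespace IsResidue

theorem map_zero (hv : IsDVal v) (hres : IsResidue v res) : res 0 = 0 := by
  rw [hres.eq_zero_iff 0 (by simp [hv.map_zero]), hv.map_zero]
  exact WithTop.coe_lt_top 0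

theorem map_sum (hv : IsDVal v) (hres : IsResidue v res) {ι : Type*} (s : Finset ι)
    (f : ι → L) (h : ∀ i ∈ s, 0 ≤ v (f i)) : res (∑ i ∈ s, f i) = ∑ i ∈ s, res (f i) := by
  classical
  induction s using Finset.induction_on with
  | empty => simp [hres.map_zero hv]
  | insert j s hj ih =>
    have hs : ∀ i ∈ s, 0 ≤ v (f i) := fun i hi => h i (mem_insert_of_mem hi)
    rw [Finset.sum_insert hj, Finset.sum_insert hj,
      hres.map_add _ _ (h j (mem_insert_self j s)) (hv.sum_nonneg s f hs), ih hs]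

end IsResidue

theorem IsDVal.v_mul_zpow_neg (hv : IsDVal v) (hπ : v π = 1) {y : L} (hy : y ≠ 0) (m : ℤ) :
    v (y * π ^ (-m)) = (vz v y - m : ℤ) := by
  rw [hv.coe_vz (mul_ne_zero hy (zpow_ne_zero _ (hv.uniformizer_ne_zero hπ))),
    hv.vz_mul_zpow_neg hπ hy]

theorem IsDVal.v_mul_zpow_neg_vz (hv : IsDVal v) (hπ : v π = 1) {y : L} (hy : y ≠ 0) :
    v (y * π ^ (-vz v y)) = 0 := by
  rw [hv.v_mul_zpow_neg hπ hy, sub_self]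
  rfl

theorem ac_ne_zero (hv : IsDVal v) (hres : IsResidue v res) (hπ : v π = 1) {y : L}
    (hy : y ≠ 0) : ac v π res y ≠ 0 := by
  have h0 := hv.v_mul_zpow_neg_vz hπ hy
  rw [ac, Ne, hres.eq_zero_iff _ h0.ge, h0]
  exact lt_irrefl 0

theorem ac_one (hv : IsDVal v) (hres : IsResidue v res) : ac v π res (1 : L) = 1 := by
  simp [ac, hv.vz_one, hres.map_one]

theorem ac_mul (hv : IsDVal v) (hres : IsResidue v res) (hπ : v π = 1) {y z : L}
    (hy : y ≠ 0) (hz : z ≠ 0) : ac v π res (y * z) = ac v π res y * ac v π res z := by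
  have hπ0 := hv.uniformizer_ne_zero hπ
  have hsplit : y * z * π ^ (-vz v (y * z)) = y * π ^ (-vz v y) * (z * π ^ (-vz v z)) := by
    rw [hv.vz_mul hy hz, neg_add, zpow_add₀ hπ0]
    ring
  rw [ac, hsplit, hres.map_mul _ _ (hv.v_mul_zpow_neg_vz hπ hy).ge
    (hv.v_mul_zpow_neg_vz hπ hz).ge]
  rfl

theorem ac_pow (hv : IsDVal v) (hres : IsResidue v res) (hπ : v π = 1) {y : L}
    (hy : y ≠ 0) (n : ℕ) : ac v π res (y ^ n) = ac v π res y ^ n := by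
  induction n with
  | zero => simp [ac_one hv hres]
  | succ n ih => rw [pow_succ, ac_mul hv hres hπ (pow_ne_zero n hy) hy, ih, pow_succ]

theorem res_mul_zpow_neg (hv : IsDVal v) (hres : IsResidue v res) (hπ : v π = 1) {y : L}
    (hy : y ≠ 0) {m : ℤ} (hm : m ≤ vz v y) :
    0 ≤ v (y * π ^ (-m)) ∧
      res (y * π ^ (-m)) = if vz v y = m then ac v π res y else 0 := by
  have hv' := hv.v_mul_zpow_neg hπ hy m
  refine ⟨by rw [hv']; exact_mod_cast sub_nonneg.mpr hm, ?_⟩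
  split_ifs with h
  · rw [← h]; rfl
  · rw [hres.eq_zero_iff _ (by rw [hv']; exact_mod_cast sub_nonneg.mpr hm), hv']
    exact_mod_cast sub_pos.mpr (lt_of_le_of_ne hm (Ne.symm h))

theorem vz_sum_eq_of_sum_ac_ne_zero (hv : IsDVal v) (hres : IsResidue v res) (hπ : v π = 1)
    {ι : Type*} (s : Finset ι) (f : ι → L) {m : ℤ} (hf : ∀ i ∈ s, f i ≠ 0)
    (hm : ∀ i ∈ s, m ≤ vz v (f i))
    (hlead : ∑ i ∈ s with vz v (f i) = m, ac v π res (f i) ≠ 0) :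
    ∑ i ∈ s, f i ≠ 0 ∧ vz v (∑ i ∈ s, f i) = m := by
  set S := ∑ i ∈ s, f i
  have hterm i (hi : i ∈ s) := res_mul_zpow_neg hv hres hπ (hf i hi) (hm i hi)
  have hscaled : S * π ^ (-m) = ∑ i ∈ s, f i * π ^ (-m) := Finset.sum_mul ..
  have hnonneg : 0 ≤ v (S * π ^ (-m)) := by
    rw [hscaled]; exact hv.sum_nonneg _ _ fun i hi => (hterm i hi).1
  have hres_ne : res (S * π ^ (-m)) ≠ 0 := by
    rw [hscaled, hres.map_sum hv _ _ fun i hi => (hterm i hi).1,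
      Finset.sum_congr rfl fun i hi => (hterm i hi).2, ← Finset.sum_filter]
    exact hlead
  have hzero : v (S * π ^ (-m)) = 0 :=
    le_antisymm (not_lt.mp fun h => hres_ne ((hres.eq_zero_iff _ hnonneg).mpr h)) hnonneg
  have hS : S ≠ 0 := by
    rintro h
    rw [h, zero_mul, hv.map_zero] at hzero
    exact WithTop.top_ne_coe hzero
  refine ⟨hS, ?_⟩
  have := hv.v_mul_zpow_neg hπ hS m
  rw [hzero] at this
  have : vz v S - m = 0 := by exact_mod_cast this.symm
  omega

open scoped Classical in
noncomputable def coeffSupport (r₀ r : ℕ) (a : ℕ → L) : Finset ℕ := {i ∈ Icc r₀ r | a i ≠ 0}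

theorem mem_coeffSupport {r₀ r i : ℕ} {a : ℕ → L} :
    i ∈ coeffSupport r₀ r a ↔ (r₀ ≤ i ∧ i ≤ r) ∧ a i ≠ 0 := by
  simp [coeffSupport]

noncomputable def termVal (q : ℕ) (v : L → WithTop ℤ) (a : ℕ → L) (t : ℤ) (i : ℕ) : ℤ :=
  vz v (a i) + q ^ i * t

open scoped Classical in
theorem phiMap_eq_sum_coeffSupport (q r₀ r : ℕ) (a : ℕ → L) (x : L) :
    phiMap q r₀ r a x = ∑ i ∈ coeffSupport r₀ r a, a i * x ^ q ^ i := by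
  rw [phiMap, coeffSupport, Finset.sum_filter_of_ne]
  intro i _ h ha
  exact h (by rw [ha, zero_mul])

theorem mem_Jset_iff {q r₀ r i : ℕ} {a : ℕ → L} {t : ℤ} :
    i ∈ Jset q v r₀ r a t ↔ i ∈ coeffSupport r₀ r a ∧
      ∀ j ∈ coeffSupport r₀ r a, termVal q v a t i ≤ termVal q v a t j := by
  simp only [Jset, Set.mem_ofPred_eq, mem_coeffSupport, termVal, and_imp, and_assoc]
  refine and_congr_right fun _ => and_congr_right fun _ => and_congr_right fun _ =>
    forall_congr' fun j => ?_
  constructor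
  · intro h hj hjr haj
    exact_mod_cast h hj hjr haj
  · intro h hj hjr haj
    exact_mod_cast h hj hjr haj

theorem mem_Pset_of_termVal_eq {q r₀ r i j : ℕ} {a : ℕ → L} {t : ℤ} (hq : 1 < q)
    (hi : i ∈ coeffSupport r₀ r a) (hj : j ∈ coeffSupport r₀ r a) (hij : i < j)
    (heq : termVal q v a t i = termVal q v a t j) : (t : ℚ) ∈ Pset q v r₀ r a := by
  rw [mem_coeffSupport] at hi hj
  refine Or.inr ⟨i, j, hi.1.1, hij, hj.1.2, hi.2, hj.2, ?_⟩
  have hpow : (q : ℚ) ^ i < (q : ℚ) ^ j := pow_lt_pow_right₀ (by exact_mod_cast hq) hij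
  have heq' : (vz v (a i) : ℚ) + (q : ℚ) ^ i * t = vz v (a j) + (q : ℚ) ^ j * t := by
    exact_mod_cast heq
  rw [eq_div_iff (sub_pos.mpr hpow).ne']
  linear_combination -heq'

theorem sum_lead_ne_zero_of_not_exc (hv : IsDVal v) (hres : IsResidue v res) (hπ : v π = 1)
    {q r₀ r i₀ : ℕ} {a : ℕ → L} {x : L} (hq : 1 < q) (hx : x ≠ 0)
    (hexc : ¬Exc q v π res r₀ r a x) (hi₀ : i₀ ∈ coeffSupport r₀ r a)
    (hmin : ∀ j ∈ coeffSupport r₀ r a, termVal q v a (vz v x) i₀ ≤ termVal q v a (vz v x) j) :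
    ∑ i ∈ coeffSupport r₀ r a with termVal q v a (vz v x) i = termVal q v a (vz v x) i₀,
      ac v π res (a i) * ac v π res x ^ q ^ i ≠ 0 := by
  classical
  set w := termVal q v a (vz v x)
  have hacx := ac_ne_zero hv hres hπ hx
  rw [Exc, not_and_or] at hexc
  rcases hexc with hP | hR
  · have hunique : ∀ i ∈ coeffSupport r₀ r a, w i = w i₀ → i = i₀ := by
      intro i hi heq
      by_contra hne
      rcases Nat.lt_or_gt_of_ne hne with h | h
      · exact hP (mem_Pset_of_termVal_eq hq hi hi₀ h heq)
      · exact hP (mem_Pset_of_termVal_eq hq hi₀ hi h heq.symm)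
    have hsingle : {i ∈ coeffSupport r₀ r a | w i = w i₀} = {i₀} := by
      ext i
      simp only [mem_filter, mem_singleton]
      exact ⟨fun h => hunique i h.1 h.2, by rintro rfl; exact ⟨hi₀, rfl⟩⟩
    rw [hsingle, sum_singleton]
    exact mul_ne_zero (ac_ne_zero hv hres hπ (mem_coeffSupport.mp hi₀).2) (pow_ne_zero _ hacx)
  · have hJ : {i ∈ Icc r₀ r | i ∈ Jset q v r₀ r a (vz v x)} =
        {i ∈ coeffSupport r₀ r a | w i = w i₀} := by
      ext i
      simp only [mem_filter, mem_Jset_iff]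
      constructor
      · rintro ⟨-, hi, hle⟩
        exact ⟨hi, le_antisymm (hle i₀ hi₀) (hmin i hi)⟩
      · rintro ⟨hi, heq⟩
        exact ⟨mem_Icc.mpr (mem_coeffSupport.mp hi).1, hi, fun j hj => heq.trans_le (hmin j hj)⟩
    rw [← hJ, Finset.sum_filter]
    exact fun h => hR (Or.inr ⟨hacx, h⟩)

theorem phiMap_ne_zero_and_vz_eq (hv : IsDVal v) (hres : IsResidue v res) (hπ : v π = 1)
    {q r₀ r i₀ : ℕ} {a : ℕ → L} {x : L} (hq : 1 < q) (hx : x ≠ 0)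
    (hexc : ¬Exc q v π res r₀ r a x) (hi₀ : i₀ ∈ coeffSupport r₀ r a)
    (hmin : ∀ j ∈ coeffSupport r₀ r a, termVal q v a (vz v x) i₀ ≤ termVal q v a (vz v x) j) :
    phiMap q r₀ r a x ≠ 0 ∧ vz v (phiMap q r₀ r a x) = termVal q v a (vz v x) i₀ := by
  have hterm : ∀ i ∈ coeffSupport r₀ r a,
      a i * x ^ q ^ i ≠ 0 ∧ vz v (a i * x ^ q ^ i) = termVal q v a (vz v x) i := by
    intro i hi
    have hai := (mem_coeffSupport.mp hi).2
    refine ⟨mul_ne_zero hai (pow_ne_zero _ hx), ?_⟩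
    rw [hv.vz_mul hai (pow_ne_zero _ hx), hv.vz_pow hx, termVal]
    push_cast
    rfl
  rw [phiMap_eq_sum_coeffSupport]
  refine vz_sum_eq_of_sum_ac_ne_zero hv hres hπ _ _ (fun i hi => (hterm i hi).1)
    (fun i hi => (hterm i hi).2 ▸ hmin i hi) ?_
  rw [Finset.filter_congr fun i hi => by rw [(hterm i hi).2]]
  rw [Finset.sum_congr rfl fun i hi => by
    rw [ac_mul hv hres hπ (mem_coeffSupport.mp (mem_filter.mp hi).1).2 (pow_ne_zero _ hx),
      ac_pow hv hres hπ hx]]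
  exact sum_lead_ne_zero_of_not_exc hv hres hπ hq hx hexc hi₀ hmin

theorem two_add_pow_le_pow {q i r : ℕ} (hq : 2 ≤ q) (hir : i < r) (h : ¬(q = 2 ∧ r = 1)) :
    q ^ i + 2 ≤ q ^ r := by
  have hstep : q ^ i * q ≤ q ^ r := by
    rw [← pow_succ]
    exact Nat.pow_le_pow_right (by omega) hir
  rcases Nat.eq_zero_or_pos i with rfl | hi
  · rw [pow_zero]
    rcases Nat.lt_or_ge 2 q with hq3 | hq2
    · exact hq3.trans_le (Nat.le_self_pow (by omega) q)
    · obtain rfl : q = 2 := by omega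
      calc 1 + 2 ≤ 2 ^ 2 := by norm_num
        _ ≤ 2 ^ r := Nat.pow_le_pow_right (by norm_num) (by omega)
  · have : 2 ≤ q ^ i := hq.trans (Nat.le_self_pow hi.ne' q)
    nlinarith

theorem lt_div_pow_sub_pow {q i r : ℕ} {m c t : ℤ} (hq : 2 ≤ q) (hir : i < r) (ht : t ≤ 0)
    (hm0 : m < 0) (hm : m ≤ c + q ^ i * t) (hspecial : ¬(q = 2 ∧ r = 1 ∧ t = 0)) :
    (m : ℚ) < c / ((q : ℚ) ^ r - (q : ℚ) ^ i) := by
  have hD : (0 : ℚ) < (q : ℚ) ^ r - (q : ℚ) ^ i :=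
    sub_pos.mpr (pow_lt_pow_right₀ (by exact_mod_cast hq) hir)
  rcases le_or_gt 0 c with hc | hc
  · calc (m : ℚ) < 0 := by exact_mod_cast hm0
      _ ≤ c / _ := div_nonneg (by exact_mod_cast hc) hD.le
  by_cases h21 : q = 2 ∧ r = 1
  · obtain ⟨rfl, rfl⟩ := h21
    obtain rfl : i = 0 := by omega
    have ht' : t < 0 := lt_of_le_of_ne ht fun h => hspecial ⟨rfl, rfl, h⟩
    norm_num
    exact_mod_cast (by omega : m < c)
  · have hD2 : (2 : ℚ) ≤ (q : ℚ) ^ r - (q : ℚ) ^ i := by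
      have := two_add_pow_le_pow hq hir h21
      rw [le_sub_iff_add_le']
      exact_mod_cast this
    have hmc : m ≤ c := hm.trans (add_le_of_nonpos_right
      (mul_nonpos_of_nonneg_of_nonpos (by positivity) ht))
    have hmcQ : (m : ℚ) ≤ c := by exact_mod_cast hmc
    have hcQ : (c : ℚ) < 0 := by exact_mod_cast hc
    have hmQ : (m : ℚ) < 0 := by exact_mod_cast hm0
    rw [lt_div_iff₀ hD]
    nlinarith [mul_nonpos_of_nonneg_of_nonpos (sub_nonneg.mpr hD2) hmQ.le]

theorem statement3_general
    (p q : ℕ) (hp : p.Prime) (hq : ∃ s : ℕ, 0 < s ∧ q = p ^ s)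
    (v : L → WithTop ℤ) (hv : IsDVal v)
    (π : L) (hπ : v π = 1) (res : L → k) (hres : IsResidue v res)
    (r₀ r : ℕ) (hr1 : 1 ≤ r)
    (a : ℕ → L)
    (hS : ∃ i ∈ Finset.Icc r₀ (r - 1), v (a i) < 0)
    (x : L) (hx : x ≠ 0) (hvx : v x ≤ 0)
    (hexc : ¬ Exc q v π res r₀ r a x)
    (hspecial : ¬ (q = 2 ∧ r = 1 ∧ v x = 0)) :
    phiMap q r₀ r a x ≠ 0 ∧
    ∀ i ∈ Finset.Icc r₀ (r - 1), a i ≠ 0 →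
      (vz v (phiMap q r₀ r a x) : ℚ) < (vz v (a i) : ℚ) / ((q : ℚ) ^ r - (q : ℚ) ^ i) := by
  have hq2 : 2 ≤ q := by
    obtain ⟨s, hs, rfl⟩ := hq
    exact Nat.one_lt_pow hs.ne' hp.one_lt
  have ht : vz v x ≤ 0 := by
    rw [hv.coe_vz hx] at hvx
    exact_mod_cast hvx
  have hsupp {i : ℕ} (hi : i ∈ Icc r₀ (r - 1)) (hai : a i ≠ 0) : i ∈ coeffSupport r₀ r a :=
    mem_coeffSupport.mpr ⟨by rw [mem_Icc] at hi; omega, hai⟩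
  obtain ⟨j, hj, hvj⟩ := hS
  have hjS := hsupp hj (hv.ne_zero_of_ne_top hvj.ne_top)
  obtain ⟨i₀, hi₀, hmin⟩ :=
    (coeffSupport r₀ r a).exists_min_image (termVal q v a (vz v x)) ⟨j, hjS⟩
  obtain ⟨hφ0, hvφ⟩ := phiMap_ne_zero_and_vz_eq hv hres hπ hq2 hx hexc hi₀ hmin
  have hm0 : termVal q v a (vz v x) i₀ < 0 := by
    rw [hv.coe_vz (mem_coeffSupport.mp hjS).2] at hvj
    calc _ ≤ termVal q v a (vz v x) j := hmin j hjS
      _ ≤ vz v (a j) := add_le_of_nonpos_right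
        (mul_nonpos_of_nonneg_of_nonpos (by positivity) ht)
      _ < 0 := by exact_mod_cast hvj
  refine ⟨hφ0, fun i hi hai => ?_⟩
  rw [hvφ]
  refine lt_div_pow_sub_pow hq2 (by rw [mem_Icc] at hi; omega) ht hm0 (hmin i (hsupp hi hai)) ?_
  rintro ⟨hq2, hr, h0⟩
  exact hspecial ⟨hq2, hr, by rw [hv.coe_vz hx, h0]; rfl⟩

/-- Lemma 2.5: if `v ∈ S`, `v(x) ≤ 0`, `Exc(x)` fails, and we are not in the special case
`q = 2`, `r = 1`, `v(x) = 0`, then `v(φ(x)) < M_v`. -/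
theorem statement3
    (p q : ℕ) (hp : p.Prime) (hq : ∃ s : ℕ, 0 < s ∧ q = p ^ s)
    [CharP L p] (F : Subfield L) (hF : Nat.card F = q)
    (v : L → WithTop ℤ) (hv : IsDVal v)
    (π : L) (hπ : v π = 1) (res : L → k) (hres : IsResidue v res)
    (r₀ r : ℕ) (hr1 : 1 ≤ r) (hr₀r : r₀ ≤ r)
    (a : ℕ → L) (har₀ : a r₀ ≠ 0) (har : a r = 1)
    (hS : ∃ i ∈ Finset.Icc r₀ (r - 1), v (a i) < 0)
    (x : L) (hx : x ≠ 0) (hvx : v x ≤ 0)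
    (hexc : ¬ Exc q v π res r₀ r a x)
    (hspecial : ¬ (q = 2 ∧ r = 1 ∧ v x = 0)) :
    phiMap q r₀ r a x ≠ 0 ∧
    ∀ i ∈ Finset.Icc r₀ (r - 1), a i ≠ 0 →
      (vz v (phiMap q r₀ r a x) : ℚ) < (vz v (a i) : ℚ) / ((q : ℚ) ^ r - (q : ℚ) ^ i) :=
  statement3_general p q hp hq v hv π hπ res hres r₀ r hr1 a hS x hx hvx hexc hspecial

end Drinfeld
end
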